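/- In the six-symbol bosonic Weyl system realizing the fields β(z), β*(z), ε_1(z), ε_1*(z), ε_2(z), ε_2*(z), with x_0⁺(m) := ½(:β*e*:)(m) and x_1⁺(m) := √−1·(:ef*:)(m), the cubic Serre relation holds in mode form: for all k_1, k_2, k_3, l ∈ ℤ, [x_1⁺(k_1), [x_1⁺(k_2), [x_1⁺(k_3), x_0⁺(l)]]] = 0, where [A,B] = AB − BA. (This is the coefficientwise form of the relation [x_1^+(z_1), [x_1^+(z_2), [x_1^+(z_3), x_0^+(w)]]] = 0 verified in the proof of Theorem 3.5.) -/

import Mathlib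

/-!
Local annihilation makes every normally ordered mode `:uv:(m)` a finite sum, hence an operator,
so all brackets can be computed in the Lie algebra `Module.End ℂ W`. Since `[u(j), v(l)]` is a
scalar, `[u(j), :XY:(m)] = ⟨u,X⟩ Y(m+j) + ⟨u,Y⟩ X(m+j)`. If moreover `v` pairs trivially with
`u`, `X` and `Y`, then `:uv:(k)` is the plain sum `Σ u(j) v(k-j)` whose factors `v(k-j)` commute
with `:XY:(m)`, and summing over `j` gives
`[:uv:(k), :XY:(m)] = ⟨u,X⟩ :vY:(k+m) + ⟨u,Y⟩ :vX:(k+m)`.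

For `x₁⁺ = √-1 :ef*:` and starred `X`, `Y` this applies with `u = e`, `v = f*`: each bracket with
`x₁⁺` replaces a starred factor by `f*`, weighted by `⟨e, ·⟩`. As `⟨e, f*⟩ = 0`, the first
bracket turns `x₀⁺ = ½ :β*e*:` into a combination of `:f*e*:` and `:f*β*:`, the second leaves
only a multiple of `:f*f*:`, and the third annihilates it.
-/

noncomputable section

/-- A *bosonic Weyl system* over a set `S` of symbols with pairing `pair : S → S → ℂ`
on a complex vector space `W`: a family of operators `op u k` (`u ∈ S`, `k ∈ ℤ`)
such that `[op u k, op v l] = ⟨u,v⟩ δ_{k+l,0} id`. -/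
def IsBosonicWeylSystem {S W : Type*} [AddCommGroup W] [Module ℂ W]
    (pair : S → S → ℂ) (op : S → ℤ → Module.End ℂ W) : Prop :=
  ∀ u v : S, ∀ k l : ℤ,
    op u k * op v l - op v l * op u k =
      if k + l = 0 then pair u v • (1 : Module.End ℂ W) else 0

/-- A family of operators is *locally annihilating* if for every vector `w` and
every symbol `u`, `op u k w = 0` for all sufficiently large `k`. -/
def LocallyAnnihilating {S W : Type*} [AddCommGroup W] [Module ℂ W]
    (op : S → ℤ → Module.End ℂ W) : Prop :=
  ∀ (w : W) (u : S), ∃ K : ℤ, ∀ k : ℤ, K ≤ k → op u k w = 0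

/-- The normally ordered quadratic mode
`(:uv:)(m) = Σ_{j<0} u(j)v(m-j) + Σ_{j≥0} v(m-j)u(j)` applied to a vector `w`;
on a locally annihilating system all but finitely many summands vanish, so the
`finsum` computes the intended (finite) sum. -/
def noMode {S W : Type*} [AddCommGroup W] [Module ℂ W]
    (op : S → ℤ → Module.End ℂ W) (u v : S) (m : ℤ) (w : W) : W :=
  ∑ᶠ j : ℤ, if j < 0 then op u j (op v (m - j) w) else op v (m - j) (op u j w)

end

/-- The six symbols `β, β*, ε₁, ε₁*, ε₂, ε₂*`: the symbol `(i, false)` is the plain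
symbol (`0 = β`, `1 = ε₁ = e`, `2 = ε₂ = f`) and `(i, true)` the starred one. -/
abbrev WSym6 : Type := Fin 3 × Bool

/-- The Gram values `g(β,β) = g(β,e) = g(e,β) = g(e,e) = g(f,f) = 1`, `g(β,f) = g(e,f) = 0`. -/
noncomputable def gram6 : Fin 3 → Fin 3 → ℂ := !![1, 1, 0; 1, 1, 0; 0, 0, 1]

/-- The pairing `⟨u, v*⟩ = -g(u,v)`, `⟨u*, v⟩ = g(u,v)`, `⟨u,v⟩ = ⟨u*,v*⟩ = 0`. -/
noncomputable def pair6 : WSym6 → WSym6 → ℂ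
  | (i, false), (j, true) => -gram6 i j
  | (i, true), (j, false) => gram6 i j
  | _, _ => 0

section
variable {W : Type*} [AddCommGroup W] [Module ℂ W] (op : WSym6 → ℤ → Module.End ℂ W)

/-- `x₀⁺(m) = ½ (:β*e*:)(m)` (applied to a vector). -/
noncomputable def xZeroPlus (m : ℤ) (w : W) : W :=
  (1 / 2 : ℂ) • noMode op (0, true) (1, true) m w

/-- `x₀⁻(m) = ½ (:βe:)(m)` (applied to a vector). -/
noncomputable def xZeroMinus (m : ℤ) (w : W) : W :=
  (1 / 2 : ℂ) • noMode op (0, false) (1, false) m w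

/-- `x₁⁺(m) = √-1 (:ef*:)(m)` (applied to a vector). -/
noncomputable def xOnePlus (m : ℤ) (w : W) : W :=
  Complex.I • noMode op (1, false) (2, true) m w

/-- `α₀(m) = -½[(:ee*:)(m) + (:eβ*:)(m) + (:βe*:)(m) + (:ββ*:)(m)]` (applied to a vector). -/
noncomputable def alZero (m : ℤ) (w : W) : W :=
  (-(1 / 2) : ℂ) • (noMode op (1, false) (1, true) m w + noMode op (1, false) (0, true) m w +
    noMode op (0, false) (1, true) m w + noMode op (0, false) (0, true) m w)

end

/-- The commutator `[A, B] = AB - BA` of two (pointwise-defined) operators. -/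
def brkt {W : Type*} [AddCommGroup W] (A B : W → W) : W → W := fun w => A (B w) - B (A w)

open Function

attribute [local instance] LieRing.ofAssociativeRing

theorem hasFiniteSupport_ite_eq {α M : Type*} [DecidableEq α] [Zero M] (a : α) (x : M) :
    HasFiniteSupport fun i => if i = a then x else 0 :=
  (Set.finite_singleton a).subset fun _ hi => of_not_not fun h => hi (if_neg h)

theorem finsum_ite_eq {α M : Type*} [DecidableEq α] [AddCommMonoid M] (a : α) (x : M) :
    ∑ᶠ i, (if i = a then x else 0) = x := by
  rw [finsum_eq_single _ a fun _ hi => if_neg hi, if_pos rfl]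

section NormalOrdering

variable {S W : Type*} [AddCommGroup W] [Module ℂ W] {op : S → ℤ → Module.End ℂ W}

def noModeTerm (op : S → ℤ → Module.End ℂ W) (u v : S) (m i : ℤ) : Module.End ℂ W :=
  if i < 0 then op u i * op v (m - i) else op v (m - i) * op u i

theorem noMode_eq_finsum_noModeTerm (u v : S) (m : ℤ) (w : W) :
    noMode op u v m w = ∑ᶠ i, noModeTerm op u v m i w := by
  simp only [noMode, noModeTerm, apply_ite (fun A : Module.End ℂ W => A w), Module.End.mul_apply]

theorem LocallyAnnihilating.hasFiniteSupport_noModeTerm (hA : LocallyAnnihilating op)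
    (u v : S) (m : ℤ) (w : W) : HasFiniteSupport fun i => noModeTerm op u v m i w := by
  obtain ⟨Ku, hKu⟩ := hA w u
  obtain ⟨Kv, hKv⟩ := hA w v
  refine (Set.finite_Icc (min (m - Kv) 0) (max Ku 0)).subset fun i hi => ?_
  contrapose! hi
  rw [Set.mem_Icc, not_and_or, not_le, not_le] at hi
  rw [notMem_support, noModeTerm]
  split_ifs
  · rw [Module.End.mul_apply, hKv (m - i) (by omega), map_zero]
  · rw [Module.End.mul_apply, hKu i (by omega), map_zero]

theorem LocallyAnnihilating.noMode_add (hA : LocallyAnnihilating op) (u v : S) (m : ℤ)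
    (x y : W) : noMode op u v m (x + y) = noMode op u v m x + noMode op u v m y := by
  simp only [noMode_eq_finsum_noModeTerm, map_add]
  exact finsum_add_distrib (hA.hasFiniteSupport_noModeTerm u v m x)
    (hA.hasFiniteSupport_noModeTerm u v m y)

theorem LocallyAnnihilating.noMode_smul (hA : LocallyAnnihilating op) (u v : S) (m : ℤ)
    (c : ℂ) (x : W) : noMode op u v m (c • x) = c • noMode op u v m x := by
  simp only [noMode_eq_finsum_noModeTerm, map_smul]
  exact (smul_finsum' c (hA.hasFiniteSupport_noModeTerm u v m x)).symm

noncomputable def LocallyAnnihilating.normalProduct (hA : LocallyAnnihilating op) (u v : S)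
    (m : ℤ) : Module.End ℂ W where
  toFun := noMode op u v m
  map_add' := hA.noMode_add u v m
  map_smul' := hA.noMode_smul u v m

@[simp]
theorem LocallyAnnihilating.normalProduct_apply (hA : LocallyAnnihilating op) (u v : S)
    (m : ℤ) (w : W) : hA.normalProduct u v m w = noMode op u v m w := rfl

end NormalOrdering

namespace IsBosonicWeylSystem

variable {S W : Type*} [AddCommGroup W] [Module ℂ W] {pair : S → S → ℂ}
  {op : S → ℤ → Module.End ℂ W}

theorem lie_op (hW : IsBosonicWeylSystem pair op) (u v : S) (k l : ℤ) :
    ⁅op u k, op v l⁆ = (if k + l = 0 then pair u v else 0) • 1 := by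
  rw [ite_smul, zero_smul]
  exact hW u v k l

theorem commute_op_of_pair_eq_zero (hW : IsBosonicWeylSystem pair op) {u v : S}
    (h : pair u v = 0) (k l : ℤ) : Commute (op u k) (op v l) := by
  rw [commute_iff_lie_eq, hW.lie_op, h, ite_self, zero_smul]

theorem lie_op_mul_op (hW : IsBosonicWeylSystem pair op) (u X Y : S) (j i n : ℤ) :
    ⁅op u j, op X i * op Y n⁆ =
      (if j + i = 0 then pair u X else 0) • op Y n +
        (if j + n = 0 then pair u Y else 0) • op X i := by
  calc ⁅op u j, op X i * op Y n⁆ = ⁅op u j, op X i⁆ * op Y n + op X i * ⁅op u j, op Y n⁆ := by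
        simp only [Ring.lie_def]; noncomm_ring
    _ = _ := by rw [hW.lie_op, hW.lie_op, smul_mul_assoc, mul_smul_comm, one_mul, mul_one]

theorem lie_op_noModeTerm (hW : IsBosonicWeylSystem pair op) (u X Y : S) (j m i : ℤ) :
    ⁅op u j, noModeTerm op X Y m i⁆ =
      (if i = -j then pair u X • op Y (m + j) else 0) +
        (if i = m + j then pair u Y • op X (m + j) else 0) := by
  have hX : (if j + i = 0 then pair u X else 0) • op Y (m - i) =
      if i = -j then pair u X • op Y (m + j) else 0 := by
    by_cases h : i = -j
    · rw [if_pos (by omega), if_pos h, h, sub_neg_eq_add]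
    · rw [if_neg (by omega), if_neg h, zero_smul]
  have hY : (if j + (m - i) = 0 then pair u Y else 0) • op X i =
      if i = m + j then pair u Y • op X (m + j) else 0 := by
    by_cases h : i = m + j
    · rw [if_pos (by omega), if_pos h, h]
    · rw [if_neg (by omega), if_neg h, zero_smul]
  by_cases hi : i < 0
  · rw [noModeTerm, if_pos hi, hW.lie_op_mul_op, hX, hY]
  · rw [noModeTerm, if_neg hi, hW.lie_op_mul_op, hX, hY, add_comm]

theorem noModeTerm_eq_of_pair_eq_zero (hW : IsBosonicWeylSystem pair op) {u v : S}
    (h : pair u v = 0) (m i : ℤ) : noModeTerm op u v m i = op u i * op v (m - i) := by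
  rw [noModeTerm, ite_eq_left_iff]
  exact fun _ => (hW.commute_op_of_pair_eq_zero h i (m - i)).eq.symm

theorem hasFiniteSupport_op_op (hW : IsBosonicWeylSystem pair op) (hA : LocallyAnnihilating op)
    {u v : S} (h : pair u v = 0) (m : ℤ) (w : W) :
    HasFiniteSupport fun i => op u i (op v (m - i) w) := by
  simpa only [hW.noModeTerm_eq_of_pair_eq_zero h, Module.End.mul_apply] using
    hA.hasFiniteSupport_noModeTerm u v m w

theorem normalProduct_apply_eq_finsum (hW : IsBosonicWeylSystem pair op)
    (hA : LocallyAnnihilating op) {u v : S} (h : pair u v = 0) (m : ℤ) (w : W) :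
    hA.normalProduct u v m w = ∑ᶠ i, op u i (op v (m - i) w) := by
  simp only [LocallyAnnihilating.normalProduct_apply, noMode_eq_finsum_noModeTerm,
    hW.noModeTerm_eq_of_pair_eq_zero h, Module.End.mul_apply]

theorem lie_op_normalProduct (hW : IsBosonicWeylSystem pair op) (hA : LocallyAnnihilating op)
    (u X Y : S) (j m : ℤ) :
    ⁅op u j, hA.normalProduct X Y m⁆ = pair u X • op Y (m + j) + pair u Y • op X (m + j) := by
  ext w
  have hfin := hA.hasFiniteSupport_noModeTerm X Y m
  calc ⁅op u j, hA.normalProduct X Y m⁆ w = ∑ᶠ i, ⁅op u j, noModeTerm op X Y m i⁆ w := by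
        rw [Ring.lie_def, LinearMap.sub_apply, Module.End.mul_apply, Module.End.mul_apply,
          LocallyAnnihilating.normalProduct_apply, LocallyAnnihilating.normalProduct_apply,
          noMode_eq_finsum_noModeTerm, noMode_eq_finsum_noModeTerm, map_finsum _ (hfin w),
          ← finsum_sub_distrib ((hfin w).fun_comp (map_zero _)) (hfin _)]
        rfl
    _ = _ := by
        simp only [hW.lie_op_noModeTerm, LinearMap.add_apply,
          apply_ite (fun A : Module.End ℂ W => A w), LinearMap.zero_apply]
        rw [finsum_add_distrib (hasFiniteSupport_ite_eq _ _) (hasFiniteSupport_ite_eq _ _),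
          finsum_ite_eq, finsum_ite_eq]

theorem op_op_shift_eq_comp (hW : IsBosonicWeylSystem pair op) {v Z : S} (h : pair v Z = 0)
    (k m : ℤ) (w : W) : (fun j => op Z (m + j) (op v (k - j) w)) =
      (fun n => op v n (op Z (k + m - n) w)) ∘ Equiv.subLeft k := by
  funext j
  rw [Function.comp_apply, Equiv.subLeft_apply, show k + m - (k - j) = m + j by ring]
  exact LinearMap.congr_fun (hW.commute_op_of_pair_eq_zero h _ _).symm w

theorem hasFiniteSupport_op_op_shift (hW : IsBosonicWeylSystem pair op)
    (hA : LocallyAnnihilating op) {v Z : S} (h : pair v Z = 0) (k m : ℤ) (w : W) :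
    HasFiniteSupport fun j => op Z (m + j) (op v (k - j) w) :=
  hW.op_op_shift_eq_comp h k m w ▸
    (hW.hasFiniteSupport_op_op hA h (k + m) w).comp_of_injective (Equiv.injective _)

theorem normalProduct_apply_eq_finsum_shift (hW : IsBosonicWeylSystem pair op)
    (hA : LocallyAnnihilating op) {v Z : S} (h : pair v Z = 0) (k m : ℤ) (w : W) :
    hA.normalProduct v Z (k + m) w = ∑ᶠ j, op Z (m + j) (op v (k - j) w) := by
  rw [hW.normalProduct_apply_eq_finsum hA h, hW.op_op_shift_eq_comp h]
  exact (finsum_comp_equiv (Equiv.subLeft k)).symm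

theorem lie_normalProduct (hW : IsBosonicWeylSystem pair op) (hA : LocallyAnnihilating op)
    {u v X Y : S} (huv : pair u v = 0) (hvX : pair v X = 0) (hvY : pair v Y = 0) (k m : ℤ) :
    ⁅hA.normalProduct u v k, hA.normalProduct X Y m⁆ =
      pair u X • hA.normalProduct v Y (k + m) + pair u Y • hA.normalProduct v X (k + m) := by
  set C := hA.normalProduct X Y m
  have hvC : ∀ n, Commute (op v n) C := fun n => by
    rw [commute_iff_lie_eq, hW.lie_op_normalProduct, hvX, hvY, zero_smul, zero_smul, add_zero]
  ext w
  have huvw := hW.hasFiniteSupport_op_op hA huv k w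
  calc ⁅hA.normalProduct u v k, C⁆ w
      = ∑ᶠ j, (op u j (op v (k - j) (C w)) - C (op u j (op v (k - j) w))) := by
        rw [Ring.lie_def, LinearMap.sub_apply, Module.End.mul_apply, Module.End.mul_apply,
          hW.normalProduct_apply_eq_finsum hA huv, hW.normalProduct_apply_eq_finsum hA huv,
          map_finsum _ huvw,
          finsum_sub_distrib (hW.hasFiniteSupport_op_op hA huv k _) (huvw.fun_comp (map_zero _))]
    _ = ∑ᶠ j, ⁅op u j, C⁆ (op v (k - j) w) := by
        refine finsum_congr fun j => ?_
        rw [show op v (k - j) (C w) = C (op v (k - j) w) from LinearMap.congr_fun (hvC (k - j)) w]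
        rfl
    _ = ∑ᶠ j, (pair u X • op Y (m + j) (op v (k - j) w) +
          pair u Y • op X (m + j) (op v (k - j) w)) := by
        simp only [C, hW.lie_op_normalProduct, LinearMap.add_apply, LinearMap.smul_apply]
    _ = _ := by
        have hY := hW.hasFiniteSupport_op_op_shift hA hvY k m w
        have hX := hW.hasFiniteSupport_op_op_shift hA hvX k m w
        rw [finsum_add_distrib (hY.fun_comp (smul_zero _)) (hX.fun_comp (smul_zero _)),
          ← smul_finsum' _ hY, ← smul_finsum' _ hX, ← hW.normalProduct_apply_eq_finsum_shift hA hvY,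
          ← hW.normalProduct_apply_eq_finsum_shift hA hvX]
        rfl

end IsBosonicWeylSystem

section SixSymbols

variable {W : Type*} [AddCommGroup W] [Module ℂ W] {op : WSym6 → ℤ → Module.End ℂ W}

theorem brkt_coe (A B : Module.End ℂ W) : brkt ⇑A ⇑B = ⇑⁅A, B⁆ := rfl

theorem xOnePlus_eq (hA : LocallyAnnihilating op) (k : ℤ) :
    xOnePlus op k = ⇑(Complex.I • hA.normalProduct (1, false) (2, true) k) := rfl

theorem xZeroPlus_eq (hA : LocallyAnnihilating op) (l : ℤ) :
    xZeroPlus op l = ⇑((1 / 2 : ℂ) • hA.normalProduct (0, true) (1, true) l) := rfl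

theorem lie_normalProduct_ef_starred (hW : IsBosonicWeylSystem pair6 op)
    (hA : LocallyAnnihilating op) (a b : Fin 3) (k m : ℤ) :
    ⁅hA.normalProduct (1, false) (2, true) k, hA.normalProduct (a, true) (b, true) m⁆ =
      -gram6 1 a • hA.normalProduct (2, true) (b, true) (k + m) +
        -gram6 1 b • hA.normalProduct (2, true) (a, true) (k + m) :=
  hW.lie_normalProduct hA (by simp [pair6, gram6]) rfl rfl k m

end SixSymbols

/-- in the six-symbol bosonic Weyl system, the cubic Serre relation
`[x₁⁺(k₁), [x₁⁺(k₂), [x₁⁺(k₃), x₀⁺(l)]]] = 0` holds in mode form. -/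
theorem serre_cubic {W : Type*} [AddCommGroup W] [Module ℂ W]
    (op : WSym6 → ℤ → Module.End ℂ W)
    (hW : IsBosonicWeylSystem pair6 op) (hA : LocallyAnnihilating op)
    (k₁ k₂ k₃ l : ℤ) (w : W) :
    brkt (xOnePlus op k₁) (brkt (xOnePlus op k₂) (brkt (xOnePlus op k₃) (xZeroPlus op l))) w
      = 0 := by
  obtain ⟨gβ, ge, gf⟩ : gram6 1 0 = 1 ∧ gram6 1 1 = 1 ∧ gram6 1 2 = 0 := by simp [gram6]
  have h₃ : ⁅Complex.I • hA.normalProduct (1, false) (2, true) k₃,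
      (1 / 2 : ℂ) • hA.normalProduct (0, true) (1, true) l⁆ =
        -(Complex.I / 2) • (hA.normalProduct (2, true) (1, true) (k₃ + l) +
          hA.normalProduct (2, true) (0, true) (k₃ + l)) := by
    rw [smul_lie, lie_smul, lie_normalProduct_ef_starred hW hA, gβ, ge]
    module
  have h₂ : ⁅Complex.I • hA.normalProduct (1, false) (2, true) k₂,
      -(Complex.I / 2) • (hA.normalProduct (2, true) (1, true) (k₃ + l) +
        hA.normalProduct (2, true) (0, true) (k₃ + l))⁆ =
          -hA.normalProduct (2, true) (2, true) (k₂ + (k₃ + l)) := by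
    rw [smul_lie, lie_smul, lie_add, lie_normalProduct_ef_starred hW hA,
      lie_normalProduct_ef_starred hW hA, gβ, ge, gf]
    match_scalars <;> ring_nf; norm_num [Complex.I_sq]
  have h₁ : ⁅hA.normalProduct (1, false) (2, true) k₁,
      hA.normalProduct (2, true) (2, true) (k₂ + (k₃ + l))⁆ = 0 := by
    rw [lie_normalProduct_ef_starred hW hA, gf, neg_zero, zero_smul, add_zero]
  simp only [xOnePlus_eq hA, xZeroPlus_eq hA, brkt_coe, h₃, h₂, lie_neg, smul_lie, h₁]
  simp
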